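/- arXiv:2112.15241 — 6 statements merged into one kernel-verified Lean document; each statement's English description precedes it below -/
import Mathlib

section
/- Let G(v) = (3+σ̄)v/2 and v₀ = √(2(3σ-σ̄)/((1+3σ)(3+σ̄))) with σ̄ = H(σ) = (1/2)√(9σ²+54σ+49) - (3/2)σ - 7/2 and 0 < σ < 1. Then the inequality (G(v₀)-v₀)/(1-G(v₀)v₀) < √σ holds if and only if 0 < σ < (1+√10)/9. -/
/-!
The number `σ̄ = H(σ)` is the positive root of `x ^ 2 + (3σ + 7) x = 3σ`, and the Rankine–Hugoniot
value of `v₀` collapses the relativistic velocity difference `(G - v₀) / (1 - G v₀)` to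
`v₀ (1 + 3σ) / 2`. Squaring turns the Lax condition into `3σ (3σ - 1) < σ̄ (1 + 5σ)`. As
`x ↦ x ^ 2 + (3σ + 7) x` increases on `x ≥ 0`, comparing `3σ (3σ - 1) / (1 + 5σ)` with its root
`σ̄` reduces this to the sign of `24σ (σ + 1) (9σ² - 2σ - 1)`, whose positive zero is `(1 + √10) / 9`.
-/

open Real

noncomputable def sigmaBar (σ : ℝ) : ℝ :=
  (1/2) * √(9*σ^2 + 54*σ + 49) - (3/2)*σ - 7/2

theorem sigmaBar_sq_add_mul {σ : ℝ} (hσ : 0 ≤ σ) :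
    sigmaBar σ ^ 2 + (3*σ + 7) * sigmaBar σ = 3*σ := by
  have hs : √(9*σ^2 + 54*σ + 49) ^ 2 = 9*σ^2 + 54*σ + 49 := sq_sqrt (by positivity)
  unfold sigmaBar
  linear_combination hs / 4

theorem sigmaBar_pos {σ : ℝ} (hσ : 0 < σ) : 0 < sigmaBar σ := by
  have hs : 3*σ + 7 < √(9*σ^2 + 54*σ + 49) := by
    rw [lt_sqrt (by positivity)]
    nlinarith
  unfold sigmaBar
  linarith

theorem lt_mul_iff_of_sq_add_mul {a b d p : ℝ} (hb : 0 ≤ b) (hp : 0 ≤ p) (hd : 0 < d) :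
    a < b * d ↔ a < 0 ∨ a^2 + p*a*d < (b^2 + p*b) * d^2 := by
  constructor
  · intro h
    rcases lt_or_ge a 0 with ha | ha
    · exact Or.inl ha
    · right
      nlinarith [mul_self_lt_mul_self ha h,
        mul_le_mul_of_nonneg_right (mul_le_mul_of_nonneg_left h.le hp) hd.le]
  · rintro (ha | h)
    · exact ha.trans_le (by positivity)
    · by_contra! hab
      nlinarith [mul_self_le_mul_self (by positivity) hab,
        mul_le_mul_of_nonneg_right (mul_le_mul_of_nonneg_left hab hp) hd.le]

theorem lax_ratio_eq {σ b v : ℝ} (hv : v^2 = 2*(3*σ - b)/((1 + 3*σ)*(3 + b)))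
    (h3 : 3 + b ≠ 0) (h1 : 1 + b ≠ 0) (hσ : 1 + 3*σ ≠ 0) :
    ((3 + b)*v/2 - v)/(1 - (3 + b)*v/2*v) = v*(1 + 3*σ)/2 := by
  have hGv : (3 + b)*v/2*v = (3*σ - b)/(1 + 3*σ) := by
    rw [show (3 + b)*v/2*v = (3 + b)/2*v^2 by ring, hv]
    field_simp
  have h1den : 1 - (3*σ - b)/(1 + 3*σ) = (1 + b)/(1 + 3*σ) := by
    field_simp
    ring
  rw [hGv, h1den, div_eq_iff (div_ne_zero h1 hσ)]
  field_simp
  ring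

theorem lax_ratio_lt_sqrt_iff {σ b v : ℝ} (hv : v^2 = 2*(3*σ - b)/((1 + 3*σ)*(3 + b)))
    (hv₀ : 0 ≤ v) (h3 : 0 < 3 + b) (hσ : 0 < 1 + 3*σ) :
    v*(1 + 3*σ)/2 < √σ ↔ 3*σ*(3*σ - 1) < b*(1 + 5*σ) := by
  have hsq : (v*(1 + 3*σ)/2)^2 = (3*σ - b)*(1 + 3*σ)/(2*(3 + b)) := by
    rw [show (v*(1 + 3*σ)/2)^2 = v^2*(1 + 3*σ)^2/4 by ring, hv]
    field_simp
    ring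
  rw [lt_sqrt (by positivity), hsq, div_lt_iff₀ (by positivity)]
  constructor <;> intro h <;> linarith

theorem nine_sq_sub_lt_zero_iff {σ : ℝ} (hσ : 0 ≤ σ) :
    9*σ^2 - 2*σ - 1 < 0 ↔ σ < (1 + √10)/9 := by
  have h10 : √10 ^ 2 = 10 := sq_sqrt (by norm_num)
  have h3 : 3 < √10 := by
    rw [lt_sqrt (by norm_num)]
    norm_num
  constructor
  · intro h
    nlinarith
  · intro h
    nlinarith [mul_pos (by linarith : 0 < √10 - (9*σ - 1)) (by linarith : 0 < √10 + (9*σ - 1))]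

theorem stmt5_general (σ : ℝ) (h0 : 0 < σ) :
    let σb : ℝ := (1/2)*Real.sqrt (9*σ^2 + 54*σ + 49) - (3/2)*σ - 7/2
    let v₀ : ℝ := Real.sqrt (2*(3*σ - σb)/((1+3*σ)*(3+σb)))
    let G₀ : ℝ := (3+σb)*v₀/2
    ((G₀ - v₀)/(1 - G₀*v₀) < Real.sqrt σ ↔ 0 < σ ∧ σ < (1 + Real.sqrt 10)/9) := by
  intro σb v₀ G₀
  have hroot : σb^2 + (3*σ + 7)*σb = 3*σ := sigmaBar_sq_add_mul h0.le
  have hb : 0 < σb := sigmaBar_pos h0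
  have hv : v₀^2 = 2*(3*σ - σb)/((1 + 3*σ)*(3 + σb)) := sq_sqrt (by
    apply div_nonneg <;> nlinarith)
  rw [lax_ratio_eq hv (by positivity) (by positivity) (by positivity),
    lax_ratio_lt_sqrt_iff hv (sqrt_nonneg _) (by positivity) (by positivity),
    lt_mul_iff_of_sq_add_mul hb.le (by positivity : 0 ≤ 3*σ + 7) (by positivity), hroot,
    ← nine_sq_sub_lt_zero_iff h0.le]
  have hpoly : (3*σ*(3*σ - 1))^2 + (3*σ + 7)*(3*σ*(3*σ - 1))*(1 + 5*σ) - 3*σ*(1 + 5*σ)^2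
      = 24*σ*(σ + 1)*(9*σ^2 - 2*σ - 1) := by ring
  have hpos : 0 < 24*σ*(σ + 1) := by positivity
  constructor
  · rintro (h | h) <;> exact ⟨h0, by nlinarith⟩
  · rintro ⟨-, h⟩
    right
    nlinarith

theorem stmt5 (σ : ℝ) (h0 : 0 < σ) (h1 : σ < 1) :
    let σb : ℝ := (1/2)*Real.sqrt (9*σ^2 + 54*σ + 49) - (3/2)*σ - 7/2
    let v₀ : ℝ := Real.sqrt (2*(3*σ - σb)/((1+3*σ)*(3+σb)))
    let G₀ : ℝ := (3+σb)*v₀/2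
    ((G₀ - v₀)/(1 - G₀*v₀) < Real.sqrt σ ↔ 0 < σ ∧ σ < (1 + Real.sqrt 10)/9) :=
  stmt5_general σ h0
end

section
/- Let σ̄ = H(σ) = (1/2)√(9σ²+54σ+49) - (3/2)σ - 7/2, v₀ = √(2(3σ-σ̄)/((1+3σ)(3+σ̄))) and G₀ = (3+σ̄)v₀/2. Then G₀ < 1 holds if and only if 0 < σ < √5/3. -/
set_option maxHeartbeats 800000


theorem stmt6 (σ : ℝ) (h0 : 0 < σ) (h1 : σ < 1) :
    let σb : ℝ := (1/2)*Real.sqrt (9*σ^2 + 54*σ + 49) - (3/2)*σ - 7/2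
    let v₀ : ℝ := Real.sqrt (2*(3*σ - σb)/((1+3*σ)*(3+σb)))
    let G₀ : ℝ := (3+σb)*v₀/2
    (G₀ < 1 ↔ 0 < σ ∧ σ < Real.sqrt 5 / 3) := by
  intro σb v₀ G₀
  have hσb : σb = (1/2)*Real.sqrt (9*σ^2 + 54*σ + 49) - (3/2)*σ - 7/2 := rfl
  set s := Real.sqrt (9*σ^2 + 54*σ + 49) with hs
  have hs0 : 0 ≤ s := Real.sqrt_nonneg _
  have hs2 : s^2 = 9*σ^2 + 54*σ + 49 := Real.sq_sqrt (by nlinarith)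
  have hsgt : 3*σ + 7 < s := by nlinarith
  have hslt : s < 9*σ + 7 := by nlinarith
  have h3 : 0 < 3 + σb := by rw [hσb]; linarith
  have h4 : 0 < 3*σ - σb := by rw [hσb]; linarith
  have h5 : 0 < (1+3*σ)*(3+σb) := by
    apply mul_pos (by linarith) h3
  have harg : 0 < 2*(3*σ - σb)/((1+3*σ)*(3+σb)) := by positivity
  have hv2 : v₀^2 = 2*(3*σ - σb)/((1+3*σ)*(3+σb)) := Real.sq_sqrt harg.le
  have hv0 : 0 < v₀ := Real.sqrt_pos.mpr harg
  have hG0 : 0 < G₀ := by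
    show 0 < (3+σb)*v₀/2
    positivity
  have hGsq : G₀^2 = (3+σb)*(3*σ-σb)/(2*(1+3*σ)) := by
    show ((3+σb)*v₀/2)^2 = _
    have h1' : ((3+σb)*v₀/2)^2 = (3+σb)^2/4 * v₀^2 := by ring
    rw [h1', hv2]
    field_simp
    ring
  have heq : (3+σb)*(3*σ-σb) = (3*σ+2)*s - (9*σ^2+21*σ+14) := by
    rw [hσb]; linear_combination (-(1:ℝ)/4) * hs2
  have key : G₀ < 1 ↔ G₀^2 < 1 := by
    constructor <;> intro h <;> nlinarith
  rw [key, hGsq, div_lt_one (by linarith), heq]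
  constructor
  · intro h
    refine ⟨h0, ?_⟩
    have hB : (0:ℝ) < 9*σ^2+27*σ+16 := by nlinarith
    have hA : (0:ℝ) ≤ (3*σ+2)*s := by positivity
    have hBA : (3*σ+2)*s < 9*σ^2+27*σ+16 := by linarith
    have hAB : ((3*σ+2)*s)^2 < (9*σ^2+27*σ+16)^2 := by
      nlinarith [mul_self_lt_mul_self hA hBA]
    have h9 : 9*σ^2 < 5 := by nlinarith [hAB, hs2, sq_nonneg σ, mul_pos h0 h0]
    have : 3*σ < Real.sqrt 5 := by
      have := Real.sq_sqrt (show (0:ℝ) ≤ 5 by norm_num)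
      nlinarith [Real.sqrt_nonneg 5]
    linarith
  · rintro ⟨-, h⟩
    have h9 : 9*σ^2 < 5 := by
      have h3σ : 3*σ < Real.sqrt 5 := by linarith
      nlinarith [Real.sq_sqrt (show (0:ℝ) ≤ 5 by norm_num), Real.sqrt_nonneg 5]
    have hAB : ((3*σ+2)*s)^2 < (9*σ^2+27*σ+16)^2 := by
      nlinarith [hs2, mul_pos (show (0:ℝ) < σ+1 by linarith) (show (0:ℝ) < 5-9*σ^2 by linarith)]
    have hA : (0:ℝ) ≤ (3*σ+2)*s := by positivity
    nlinarith [hAB]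
end

section
/- Fix 0 < σ̄ < σ < 1 with σσ̄ < 1. Then the point with G = (√σ(1+σ̄) + √((σ-σ̄)(1-σσ̄)))/(1+σ) and v = √((σ-σ̄)/(1-σσ̄)) satisfies both the Rankine-Hugoniot condition ((σ+v²)G - (1+σ)G²v)/((1+σv²)G - (1+σ)v) = σ̄ and the sonic condition (G-v)² = σ(1-Gv)². -/
theorem stmt12 (σ σb : ℝ) (h0 : 0 < σb) (h1 : σb < σ) (h2 : σ < 1) (h3 : σ*σb < 1) :
    let v : ℝ := Real.sqrt ((σ - σb)/(1 - σ*σb))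
    let G : ℝ := (Real.sqrt σ * (1 + σb) + Real.sqrt ((σ - σb)*(1 - σ*σb)))/(1 + σ)
    ((σ + v^2)*G - (1+σ)*G^2*v)/((1 + σ*v^2)*G - (1+σ)*v) = σb ∧
    (G - v)^2 = σ*(1 - G*v)^2 := by
  intro v G
  have hσ0 : 0 < σ := h0.trans h1
  have hd : 0 < 1 - σ*σb := by linarith
  set a : ℝ := Real.sqrt σ with ha
  have ha0 : 0 < a := Real.sqrt_pos.2 hσ0
  have ha2 : a^2 = σ := Real.sq_sqrt hσ0.le
  have ha1 : a < 1 := by nlinarith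
  have hv0 : 0 ≤ v := Real.sqrt_nonneg _
  have hv2 : v^2 * (1 - σ*σb) = σ - σb := by
    have : v^2 = (σ - σb)/(1 - σ*σb) := Real.sq_sqrt (div_nonneg (by linarith) hd.le)
    rw [this]; field_simp
  have hvsq : v^2 < 1 := by nlinarith
  have hv1 : v < 1 := by nlinarith [sq_nonneg (v - 1)]
  have hw : Real.sqrt ((σ - σb)*(1 - σ*σb)) = v * (1 - σ*σb) := by
    have he : (σ - σb)*(1 - σ*σb) = ((σ - σb)/(1 - σ*σb)) * (1 - σ*σb)^2 := by
      field_simp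
    rw [he, Real.sqrt_mul (div_nonneg (by linarith) hd.le), Real.sqrt_sq hd.le]
  have h1av : 0 < 1 + a*v := by positivity
  have hGdef : G = (a * (1 + σb) + Real.sqrt ((σ - σb)*(1 - σ*σb)))/(1 + σ) := rfl
  rw [hw] at hGdef
  have hG : G = (a + v)/(1 + a*v) := by
    rw [hGdef, div_eq_div_iff (by linarith) h1av.ne']
    linear_combination (v + v*σb)*ha2 + a*hv2
  have hav1 : a*v < 1 := by nlinarith
  have hasv : 0 < a - σ*v := by nlinarith
  have hv2' : 0 < 1 - v^2 := by nlinarith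
  have hM : (1 + σ*v^2)*G - (1+σ)*v = (1-v^2)*(a-σ*v)/(1+a*v) := by
    rw [hG]; field_simp; ring
  have hN : (σ + v^2)*G - (1+σ)*G^2*v = (1-v^2)*(a+v)*(σ - a*v)/(1+a*v)^2 := by
    rw [hG]; field_simp; ring
  have key : (a+v)*(σ - a*v) = σb*((a-σ*v)*(1+a*v)) := by
    linear_combination (-v - σb*v)*ha2 - a*hv2
  constructor
  · rw [hN, hM]
    rw [div_div_div_eq]
    rw [div_eq_iff (by positivity)]
    linear_combination ((1-v^2)*(1+a*v))*key
  · rw [hG]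
    field_simp
    linear_combination (1-v^2)^2*ha2
end

section
/- For σ = σ̄ = 1/3 and G₀ = (3+σ̄)v₀/2 with v₀ on the Rankine-Hugoniot curve at A = 1-2M(1/3) = 4/7: if G₀ > √(1/3) and (G₀-v₀)² < (1/3)(1-G₀v₀)², then both Lax characteristic conditions (√σ̄-v₀)/(1-√σ̄·v₀) < (G₀-v₀)/(1-G₀v₀) < √σ hold. -/
theorem stmt13 (v₀ G₀ : ℝ) (hv0 : 0 < v₀) (hv1 : v₀ < 1) (hG1 : G₀ < 1)
    (hGdef : G₀ = (3 + (1/3:ℝ))*v₀/2)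
    (hRH : (((1/3:ℝ) + v₀^2)*G₀ - (1+(1/3:ℝ))*G₀^2*v₀)
      / ((1 + (1/3:ℝ)*v₀^2)*G₀ - (1+(1/3:ℝ))*v₀) = (1/3:ℝ))
    (hG : G₀ > Real.sqrt (1/3))
    (hD : (G₀ - v₀)^2 < (1/3)*(1 - G₀*v₀)^2) :
    (Real.sqrt (1/3) - v₀)/(1 - Real.sqrt (1/3) * v₀) < (G₀ - v₀)/(1 - G₀*v₀) ∧
    (G₀ - v₀)/(1 - G₀*v₀) < Real.sqrt (1/3) := by
  set s := Real.sqrt (1/3) with hs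
  have hs2 : s^2 = 1/3 := Real.sq_sqrt (by norm_num)
  have hs0 : 0 < s := Real.sqrt_pos.2 (by norm_num)
  have hs1 : s < 1 := by nlinarith
  have hG0 : 0 < G₀ := by rw [hGdef]; nlinarith
  have h1 : 0 < 1 - G₀*v₀ := by nlinarith
  have h2 : 0 < 1 - s*v₀ := by nlinarith
  constructor
  · rw [div_lt_div_iff₀ h2 h1]
    nlinarith [mul_pos (sub_pos.2 hG) (mul_pos (sub_pos.2 hv1) (by linarith : (0:ℝ) < 1 + v₀))]
  · rw [div_lt_iff₀ h1]
    nlinarith [mul_pos hs0 h1]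
end

section
/- Suppose σ = σ̄ and the point (G₀, v₀) with 0 < v₀ < G₀ < 1 satisfies the Rankine-Hugoniot condition ((σ+v₀²)G₀ - (1+σ)G₀²v₀)/((1+σv₀²)G₀ - (1+σ)v₀) = σ. Then G₀ > √σ and (G₀-v₀)² < σ(1-Gv₀)² both hold; i.e., the Lax characteristic conditions are automatically satisfied when the interior and exterior equation of state parameters are equal. -/
theorem stmt14 (σ G₀ v₀ : ℝ) (hσ0 : 0 < σ) (hσ1 : σ < 1)
    (hv0 : 0 < v₀) (hvG : v₀ < G₀) (hG1 : G₀ < 1)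
    (hRH : ((σ + v₀^2)*G₀ - (1+σ)*G₀^2*v₀)
      / ((1 + σ*v₀^2)*G₀ - (1+σ)*v₀) = σ) :
    G₀ > Real.sqrt σ ∧ (G₀ - v₀)^2 < σ*(1 - G₀*v₀)^2 := by
  have hG0 : 0 < G₀ := lt_trans hv0 hvG
  have hD : (1 + σ*v₀^2)*G₀ - (1+σ)*v₀ ≠ 0 := by
    intro h
    rw [h, div_zero] at hRH
    linarith
  have hkey' : (σ + v₀^2)*G₀ - (1+σ)*G₀^2*v₀ = σ * ((1 + σ*v₀^2)*G₀ - (1+σ)*v₀) :=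
    (div_eq_iff hD).mp hRH
  have hkey : G₀^2 - σ = G₀*v₀*(1-σ) := by
    have hv : (1+σ)*v₀ > 0 := by positivity
    nlinarith [hv]
  have hσG : σ < G₀^2 := by
    nlinarith [mul_pos (mul_pos hG0 hv0) (show (0:ℝ) < 1 - σ by linarith)]
  refine ⟨(Real.sqrt_lt' hG0).mpr hσG, ?_⟩
  have h1 : (G₀ - v₀)*(G₀*(1-σ)) = σ*(1-G₀^2) := by linear_combination hkey
  have h2 : (1 - G₀*v₀)*(1-σ) = 1 - G₀^2 := by linear_combination hkey
  have hpos : 0 < G₀^2*(1-σ)^2 := mul_pos (pow_pos hG0 2) (pow_pos (by linarith) 2)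
  have key : (G₀-v₀)^2 * (G₀^2*(1-σ)^2) < σ*(1-G₀*v₀)^2 * (G₀^2*(1-σ)^2) := by
    have e1 : (G₀-v₀)^2 * (G₀^2*(1-σ)^2) = σ^2*(1-G₀^2)^2 := by
      linear_combination ((G₀-v₀)*(G₀*(1-σ)) + σ*(1-G₀^2)) * h1
    have e2 : σ*(1-G₀*v₀)^2 * (G₀^2*(1-σ)^2) = σ*G₀^2*(1-G₀^2)^2 := by
      linear_combination σ*G₀^2*((1-G₀*v₀)*(1-σ) + (1-G₀^2)) * h2
    rw [e1, e2]
    have hsq : 0 < (1-G₀^2)^2 := pow_pos (by nlinarith) 2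
    nlinarith [mul_pos (mul_pos hσ0 (show (0:ℝ) < G₀^2 - σ by linarith)) hsq]
  exact lt_of_mul_lt_mul_right key hpos.le
end

section
/- For all σ in (0,1), 0 < n < 3/2, and v in (0,1): 3 - 3v² + σ(9+n)v² - σ(9+nσ)v⁴ > 0. -/
theorem stmt17 (σ n v : ℝ) (hσ0 : 0 < σ) (hσ1 : σ < 1) (hn0 : 0 < n) (hn1 : n < 3/2)
    (hv0 : 0 < v) (hv1 : v < 1) :
    3 - 3*v^2 + σ*(9+n)*v^2 - σ*(9+n*σ)*v^4 > 0 := by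
  have hv2 : v^2 < 1 := by nlinarith
  have h1 : 3 - 3*v^2 > 0 := by nlinarith
  have h2 : σ*(9+n)*v^2 - σ*(9+n*σ)*v^4 > 0 := by
    have : (9+n*σ)*v^2 < 9+n := by nlinarith [mul_pos hn0 hσ0, mul_lt_mul_of_pos_left hv2 (show (0:ℝ) < 9+n*σ by nlinarith [mul_pos hn0 hσ0])]
    have hp : σ*v^2 > 0 := by positivity
    nlinarith [mul_lt_mul_of_pos_left this hp]
  linarith
end
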